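/- Let m be a positive integer and α > 0. Then 1 / ∏_{j=1}^{2m} Γ(α + (j-1)/2) = D_m · ((2m)^{2mα} / Γ(2mα)) · ∏_{j=2}^{m} ∫_0^1 ρ^{2α + (j-1)/m - 1} (1-ρ)^{(2 - 1/m)(j-1) - 1} dρ, where D_m = (∏_{j=1}^{m} 2^{2(j-1)-1}) · (2π)^{(1-m)/2} · m^{-1/2} / (π^{m/2} ∏_{j=2}^{m} Γ((2 - 1/m)(j-1))). -/

import Mathlib

open Real MeasureTheory Finset

/-!
Each integral is a Beta integral,
`B(2α + (j-1)/m, (2 - 1/m)(j-1)) = Γ(2α + (j-1)/m) Γ((2 - 1/m)(j-1)) / Γ(2α + 2(j-1))`,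
so the Gamma factors in the denominator of `D_m` cancel. Gauss's multiplication formula
`∏_{k<m} Γ(z + k/m) = m^(1/2 - mz) (2π)^((m-1)/2) Γ(mz)` at `z = 2α` absorbs the remaining
numerators into `Γ(2mα)`, and Legendre's duplication formula pairs the `2m` factors
`Γ(α + (j-1)/2)` on the left into the `m` factors `Γ(2α + 2(j-1))`; what is left is a
cancellation of powers of `2`, `π` and `m`.

Gauss's formula follows from the Bohr–Mollerup theorem: its product side, as a function of
`s = mz` divided by the constants, is log-convex and satisfies `f (s + 1) = s f s`. The
normalisation at `s = 1` is `∏_{k<m-1} Γ((k+1)/m) = √((2π)^(m-1)/m)`, which follows from the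
reflection formula and `∏_{k<m-1} 2 sin(π(k+1)/m) = m`, the norm of `∏ (1 - ζ^(k+1))` for a
primitive `m`-th root of unity `ζ`.
-/

theorem ConvexOn.fun_finset_sum {𝕜 E β ι : Type*} [Semiring 𝕜] [PartialOrder 𝕜]
    [AddCommMonoid E] [AddCommMonoid β] [PartialOrder β] [IsOrderedAddMonoid β] [SMul 𝕜 E]
    [Module 𝕜 β] {s : Set E} {t : Finset ι} {f : ι → E → β} (hs : Convex 𝕜 s)
    (hf : ∀ i ∈ t, ConvexOn 𝕜 s (f i)) : ConvexOn 𝕜 s fun x => ∑ i ∈ t, f i x := by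
  classical
  induction t using Finset.induction_on with
  | empty => simpa using convexOn_const 0 hs
  | insert i t hi ih =>
    simp only [sum_insert hi]
    exact (hf i (mem_insert_self i t)).add (ih fun j hj => hf j (mem_insert_of_mem hj))

theorem prod_range_two_mul {M : Type*} [CommMonoid M] (f : ℕ → M) (n : ℕ) :
    ∏ j ∈ range (2 * n), f j = ∏ k ∈ range n, (f (2 * k) * f (2 * k + 1)) := by
  induction n with
  | zero => simp
  | succ n ih => rw [mul_add_one, prod_range_succ, prod_range_succ, prod_range_succ, ih, mul_assoc]

theorem prod_Icc_one_natCast_sub_one {M : Type*} [CommMonoid M] (f : ℝ → M) (n : ℕ) :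
    ∏ j ∈ Icc 1 n, f ((j : ℝ) - 1) = ∏ k ∈ range n, f k := by
  rw [← Ico_add_one_right_eq_Icc, prod_Ico_eq_prod_range, Nat.add_sub_cancel]
  push_cast
  simp only [add_sub_cancel_left]

theorem mul_prod_Icc_two_natCast_sub_one {M : Type*} [CommMonoid M] (f : ℝ → M) {n : ℕ}
    (hn : 0 < n) : f 0 * ∏ j ∈ Icc 2 n, f ((j : ℝ) - 1) = ∏ k ∈ range n, f k := by
  rw [← prod_Icc_one_natCast_sub_one, ← mul_prod_Ioc_eq_prod_Icc (show 1 ≤ n from hn),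
    ← Icc_add_one_left_eq_Ioc]
  norm_num

theorem integral_rpow_mul_one_sub_rpow {a b : ℝ} (ha : 0 < a) (hb : 0 < b) :
    ∫ x in Set.Ioo (0 : ℝ) 1, x ^ (a - 1) * (1 - x) ^ (b - 1) =
      Gamma a * Gamma b / Gamma (a + b) := by
  change _ = ProbabilityTheory.beta a b
  rw [ProbabilityTheory.beta_eq_betaIntegralReal a b ha hb, Complex.betaIntegral,
    intervalIntegral.integral_of_le zero_le_one, ← integral_Ioc_eq_integral_Ioo,
    ← RCLike.re_to_complex, ← integral_re]
  · refine setIntegral_congr_fun measurableSet_Ioc fun x ⟨hx0, hx1⟩ ↦ ?_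
    norm_cast
    rw [← Complex.ofReal_cpow hx0.le, ← Complex.ofReal_cpow (sub_nonneg.2 hx1),
      RCLike.re_to_complex, ← Complex.ofReal_mul, Complex.ofReal_re]
  · have := Complex.betaIntegral_convergent (u := a) (v := b) (by simpa) (by simpa)
    rwa [intervalIntegrable_iff_integrableOn_Ioc_of_le zero_le_one] at this

namespace Real

theorem prod_two_mul_sin_pi_mul_div (n : ℕ) :
    ∏ k ∈ range n, (2 * sin (π * (k + 1) / (n + 1))) = n + 1 := by
  have hμ := Complex.isPrimitiveRoot_exp (n + 1) n.succ_ne_zero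
  have h := congrArg (‖·‖) hμ.prod_one_sub_pow_eq_order
  simp only [norm_prod] at h
  convert h using 1
  · refine prod_congr rfl fun k hk => ?_
    have hk : (k : ℝ) + 1 ≤ n + 1 := by exact_mod_cast Nat.succ_le_succ (mem_range.1 hk).le
    have harg : Complex.exp (2 * π * Complex.I / (n + 1 : ℕ)) ^ (k + 1) =
        Complex.exp (Complex.I * ((2 * π * (k + 1) / (n + 1) : ℝ))) := by
      rw [← Complex.exp_nat_mul]
      push_cast
      ring_nf
    rw [harg, norm_sub_rev, Complex.norm_exp_I_mul_ofReal_sub_one, Real.norm_of_nonneg]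
    · ring_nf
    · refine mul_nonneg zero_le_two (sin_nonneg_of_nonneg_of_le_pi (by positivity) ?_)
      rw [div_div, div_le_iff₀ (by positivity)]
      nlinarith [pi_pos]
  · norm_cast

theorem prod_Gamma_nat_add_one_div (n : ℕ) :
    ∏ k ∈ range n, Gamma ((k + 1) / (n + 1)) = √((2 * π) ^ n / (n + 1)) := by
  set P := ∏ k ∈ range n, Gamma ((k + 1) / (n + 1))
  have hP : 0 < P := prod_pos fun k _ => Gamma_pos_of_pos (by positivity)
  have hreflect : ∏ k ∈ range n, Gamma (1 - (k + 1) / (n + 1)) = P := by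
    rw [← prod_range_reflect]
    refine prod_congr rfl fun k hk => congrArg Gamma ?_
    have hk := mem_range.1 hk
    rw [Nat.cast_sub (by omega), Nat.cast_sub (by omega)]
    field_simp
    ring
  have hsin : ∏ k ∈ range n, sin (π * ((k + 1) / (n + 1))) = (n + 1) / 2 ^ n := by
    have h := prod_two_mul_sin_pi_mul_div n
    simp only [prod_mul_distrib, prod_const, card_range, mul_div_assoc] at h
    rw [eq_div_iff (by positivity), mul_comm, h]
  rw [← sqrt_sq hP.le, sq]
  congr 1
  calc P * P = ∏ k ∈ range n, (Gamma ((k + 1) / (n + 1)) * Gamma (1 - (k + 1) / (n + 1))) := by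
        rw [prod_mul_distrib, hreflect]
    _ = ∏ k ∈ range n, (π / sin (π * ((k + 1) / (n + 1)))) :=
        prod_congr rfl fun k _ => Gamma_mul_Gamma_one_sub _
    _ = (2 * π) ^ n / (n + 1) := by
        rw [prod_div_distrib, prod_const, card_range, hsin, mul_pow]
        field_simp

theorem convexOn_log_Gamma_mul_add {c d : ℝ} (hc : 0 < c) (hd : 0 ≤ d) :
    ConvexOn ℝ (Set.Ioi 0) fun s => log (Gamma (c * s + d)) := by
  refine ⟨convex_Ioi 0, fun x (hx : 0 < x) y (hy : 0 < y) a b ha hb hab => ?_⟩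
  have h := convexOn_log_Gamma.2 (x := c * x + d) (y := c * y + d) (by simp; positivity)
    (by simp; positivity) ha hb hab
  simp only [smul_eq_mul, Function.comp_apply] at h ⊢
  rwa [show c * (a * x + b * y) + d = a * (c * x + d) + b * (c * y + d) by
    linear_combination d * hab.symm]

noncomputable def multiplicationGamma (m : ℕ) (s : ℝ) : ℝ :=
  (∏ k ∈ range m, Gamma ((s + k) / m)) * m ^ (s - 1 / 2) * (2 * π) ^ ((1 - m : ℝ) / 2)

section multiplicationGamma

variable {m : ℕ}

theorem multiplicationGamma_pos (hm : 0 < m) {s : ℝ} (hs : 0 < s) :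
    0 < multiplicationGamma m s := by
  have hm' : (0 : ℝ) < m := by exact_mod_cast hm
  exact mul_pos (mul_pos (prod_pos fun k _ => Gamma_pos_of_pos (by positivity))
    (rpow_pos_of_pos hm' _)) (rpow_pos_of_pos (by positivity) _)

theorem multiplicationGamma_add_one (hm : 0 < m) {s : ℝ} (hs : 0 < s) :
    multiplicationGamma m (s + 1) = s * multiplicationGamma m s := by
  have hm' : (0 : ℝ) < m := by exact_mod_cast hm
  have hGamma : Gamma (s / m) ≠ 0 := (Gamma_pos_of_pos (by positivity)).ne'
  have hprod : ∏ k ∈ range m, Gamma ((s + 1 + k) / m) =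
      s / m * ∏ k ∈ range m, Gamma ((s + k) / m) := by
    have h := (prod_range_succ' (fun k : ℕ => Gamma ((s + k) / m)) m).symm.trans
      (prod_range_succ _ m)
    rw [show (s + m) / m = s / m + 1 by field_simp, Gamma_add_one (by positivity)] at h
    refine mul_right_cancel₀ hGamma ?_
    simp only [Nat.cast_add, Nat.cast_one, Nat.cast_zero, add_zero, ← add_assoc] at h
    simp_rw [add_right_comm s 1, h]
    ring
  rw [multiplicationGamma, multiplicationGamma, hprod, add_sub_right_comm, rpow_add_one hm'.ne']
  field_simp

theorem multiplicationGamma_one (hm : 0 < m) : multiplicationGamma m 1 = 1 := by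
  obtain ⟨n, rfl⟩ := Nat.exists_eq_add_of_lt hm
  have h2π : (0 : ℝ) < 2 * π := by positivity
  have hprod : ∏ k ∈ range (n + 1), Gamma ((1 + k) / (n + 1 : ℕ)) =
      √((2 * π) ^ n / (n + 1)) := by
    rw [prod_range_succ, ← prod_Gamma_nat_add_one_div n]
    push_cast
    rw [add_comm 1 (n : ℝ), div_self (by positivity), Gamma_one, mul_one]
    simp only [add_comm (1 : ℝ)]
  rw [multiplicationGamma, zero_add, hprod, sqrt_eq_rpow, div_rpow (by positivity) (by positivity),
    ← rpow_natCast, ← rpow_mul h2π.le]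
  push_cast
  rw [show (1 : ℝ) - 1 / 2 = 1 / 2 by norm_num, div_mul_cancel₀ _ (by positivity),
    ← rpow_add h2π, show n * (1 / 2) + (1 - (n + 1)) / 2 = (0 : ℝ) by ring, rpow_zero]

theorem convexOn_log_multiplicationGamma (hm : 0 < m) :
    ConvexOn ℝ (Set.Ioi 0) (log ∘ multiplicationGamma m) := by
  have hm' : (0 : ℝ) < m := by exact_mod_cast hm
  have hlog : Set.EqOn (fun s => (∑ k ∈ range m, log (Gamma ((m : ℝ)⁻¹ * s + k / m))) +
      (log m * s + ((1 - m) / 2 * log (2 * π) - log m / 2))) (log ∘ multiplicationGamma m)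
      (Set.Ioi 0) := by
    intro s (hs : 0 < s)
    have hGamma : ∀ k ∈ range m, Gamma ((s + k) / m) ≠ 0 :=
      fun k _ => (Gamma_pos_of_pos (by positivity)).ne'
    have hpow : ∀ {x : ℝ} (y : ℝ), 0 < x → x ^ y ≠ 0 := fun y hx => (rpow_pos_of_pos hx y).ne'
    have hargs : ∀ k : ℕ, (s + k) / m = (m : ℝ)⁻¹ * s + k / m := fun k => by ring
    rw [Function.comp_apply, multiplicationGamma,
      log_mul (mul_ne_zero (prod_ne_zero_iff.2 hGamma) (hpow _ hm')) (hpow _ (by positivity)),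
      log_mul (prod_ne_zero_iff.2 hGamma) (hpow _ hm'), log_prod hGamma, log_rpow hm',
      log_rpow (by positivity)]
    simp only [hargs]
    ring
  refine ConvexOn.congr ?_ hlog
  refine (ConvexOn.fun_finset_sum (convex_Ioi 0) fun k _ =>
    convexOn_log_Gamma_mul_add (by positivity) (by positivity)).add (ConvexOn.add_const ?_ _)
  simpa only [smul_eq_mul, id_eq] using
    (convexOn_id (convex_Ioi (0 : ℝ))).smul (log_nonneg (Nat.one_le_cast.2 hm))

theorem multiplicationGamma_eq_Gamma (hm : 0 < m) {s : ℝ} (hs : 0 < s) :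
    multiplicationGamma m s = Gamma s :=
  eq_Gamma_of_log_convex (convexOn_log_multiplicationGamma hm)
    (fun hy => multiplicationGamma_add_one hm hy) (fun hy => multiplicationGamma_pos hm hy)
    (multiplicationGamma_one hm) hs

theorem prod_Gamma_add_div_eq (hm : 0 < m) {z : ℝ} (hz : 0 < z) :
    ∏ k ∈ range m, Gamma (z + k / m) =
      (m : ℝ) ^ (1 / 2 - m * z) * (2 * π) ^ ((m - 1 : ℝ) / 2) * Gamma (m * z) := by
  have hm' : (0 : ℝ) < m := by exact_mod_cast hm
  have h := multiplicationGamma_eq_Gamma hm (by positivity : 0 < m * z)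
  have hargs : ∀ k : ℕ, (m * z + k) / m = z + k / m := fun k => by field_simp
  simp only [multiplicationGamma, hargs] at h
  rw [← h, show 1 / 2 - m * z = -(m * z - 1 / 2) by ring,
    show (m - 1 : ℝ) / 2 = -((1 - m) / 2) by ring, rpow_neg hm'.le, rpow_neg (by positivity)]
  field_simp

end multiplicationGamma

theorem prod_Gamma_add_half (α : ℝ) (m : ℕ) :
    ∏ k ∈ range (2 * m), Gamma (α + k / 2) =
      ∏ k ∈ range m, (Gamma (2 * α + 2 * k) * 2 ^ (1 - 2 * α - 2 * k) * √π) := by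
  rw [prod_range_two_mul]
  refine prod_congr rfl fun k _ => ?_
  push_cast
  rw [show α + (2 * k + 1) / 2 = α + 2 * k / 2 + 1 / 2 by ring, Gamma_mul_Gamma_add_half]
  ring_nf

end Real

theorem two_sub_one_div_mul_natCast_sub_one_pos {m j : ℕ} (hm : 0 < m) (hj : 2 ≤ j) :
    0 < (2 - 1 / (m : ℝ)) * ((j : ℝ) - 1) := by
  have h1 : 1 / (m : ℝ) ≤ 1 := div_le_one_of_le₀ (by exact_mod_cast hm) (by positivity)
  have h2 : (2 : ℝ) ≤ j := by exact_mod_cast hj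
  exact mul_pos (by linarith) (by linarith)

theorem prod_Icc_two_integral_eq {m : ℕ} (hm : 0 < m) {α : ℝ} (hα : 0 < α) :
    ∏ j ∈ Icc 2 m, ∫ ρ in Set.Ioo (0 : ℝ) 1,
        ρ ^ (2 * α + ((j : ℝ) - 1) / m - 1) * (1 - ρ) ^ ((2 - 1 / (m : ℝ)) * ((j : ℝ) - 1) - 1) =
      (m : ℝ) ^ (1 / 2 - 2 * m * α) * (2 * π) ^ ((m - 1 : ℝ) / 2) * Gamma (2 * m * α) *
        (∏ j ∈ Icc 2 m, Gamma ((2 - 1 / (m : ℝ)) * ((j : ℝ) - 1))) /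
        ∏ k ∈ range m, Gamma (2 * α + 2 * k) := by
  have hj : ∀ j ∈ Icc 2 m, (0 : ℝ) < (j : ℝ) - 1 := fun j hj => by
    have : (2 : ℝ) ≤ j := by exact_mod_cast (mem_Icc.1 hj).1
    linarith
  rw [prod_congr rfl fun j hj' => integral_rpow_mul_one_sub_rpow
    (by have := hj j hj'; positivity)
    (two_sub_one_div_mul_natCast_sub_one_pos hm (mem_Icc.1 hj').1)]
  have hsum : ∀ x : ℝ, 2 * α + x / m + (2 - 1 / m) * x = 2 * α + 2 * x := fun x => by
    field_simp; ring
  have hgauss := mul_prod_Icc_two_natCast_sub_one (fun x => Gamma (2 * α + x / m)) hm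
  have hdenom := mul_prod_Icc_two_natCast_sub_one (fun x => Gamma (2 * α + 2 * x)) hm
  simp only [zero_div, mul_zero, add_zero] at hgauss hdenom
  rw [Real.prod_Gamma_add_div_eq hm (by positivity), mul_left_comm, ← mul_assoc] at hgauss
  have hG : Gamma (2 * α) ≠ 0 := (Gamma_pos_of_pos (by positivity)).ne'
  rw [mul_comm, ← eq_div_iff hG] at hgauss hdenom
  simp only [hsum]
  rw [prod_div_distrib, prod_mul_distrib, hgauss, hdenom]
  field_simp

theorem prod_rpow_mul_prod_rpow_eq {b : ℝ} (hb : 0 < b) (α : ℝ) (m : ℕ) :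
    (∏ k ∈ range m, b ^ (1 - 2 * α - 2 * k)) * ∏ k ∈ range m, b ^ (2 * (k : ℝ) - 1) =
      b ^ (-(2 * m * α)) := by
  rw [← prod_mul_distrib]
  simp only [← rpow_add hb, show ∀ k : ℝ, 1 - 2 * α - 2 * k + (2 * k - 1) = -(2 * α) by
    intro k; ring]
  rw [prod_const, card_range, ← rpow_mul_natCast hb.le]
  ring_nf

theorem rpow_neg_half_mul_two_mul_rpow_mul_rpow {y : ℝ} (hy : 0 < y) (x : ℝ) :
    y ^ (-1 / 2 : ℝ) * (2 * y) ^ x * y ^ (1 / 2 - x) = 2 ^ x := by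
  rw [mul_rpow zero_le_two hy.le, mul_left_comm, mul_assoc, ← rpow_add hy, ← rpow_add hy]
  ring_nf
  rw [rpow_zero, mul_one]

theorem stmt_13 (m : ℕ) (hm : 0 < m) (α : ℝ) (hα : 0 < α) :
    1 / ∏ j ∈ Finset.Icc 1 (2 * m), Real.Gamma (α + ((j : ℝ) - 1) / 2) =
      ((∏ j ∈ Finset.Icc 1 m, (2 : ℝ) ^ (2 * ((j : ℝ) - 1) - 1)) *
          (2 * π) ^ ((1 - (m : ℝ)) / 2) * (m : ℝ) ^ (-(1 : ℝ) / 2) /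
          (π ^ ((m : ℝ) / 2) *
            ∏ j ∈ Finset.Icc 2 m, Real.Gamma ((2 - 1 / (m : ℝ)) * ((j : ℝ) - 1)))) *
        ((2 * (m : ℝ)) ^ (2 * (m : ℝ) * α) / Real.Gamma (2 * (m : ℝ) * α)) *
        ∏ j ∈ Finset.Icc 2 m,
          ∫ ρ in Set.Ioo (0 : ℝ) 1,
            ρ ^ (2 * α + ((j : ℝ) - 1) / (m : ℝ) - 1) *
              (1 - ρ) ^ ((2 - 1 / (m : ℝ)) * ((j : ℝ) - 1) - 1) := by
  have hsqrt : √π ^ m = π ^ (m / 2 : ℝ) := by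
    rw [sqrt_eq_rpow, ← rpow_mul_natCast pi_pos.le]
    ring_nf
  rw [prod_Icc_two_integral_eq hm hα,
    prod_Icc_one_natCast_sub_one (fun x => Gamma (α + x / 2)), Real.prod_Gamma_add_half,
    prod_Icc_one_natCast_sub_one (fun x => (2 : ℝ) ^ (2 * x - 1)),
    prod_mul_distrib, prod_mul_distrib, prod_const, card_range, hsqrt]
  set P := ∏ k ∈ range m, Gamma (2 * α + 2 * k)
  set C := ∏ j ∈ Icc 2 m, Gamma ((2 - 1 / (m : ℝ)) * ((j : ℝ) - 1))
  have hP : P ≠ 0 := (prod_pos fun k _ => Gamma_pos_of_pos (by positivity)).ne'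
  have hC : C ≠ 0 :=
    (prod_pos fun j hj => Gamma_pos_of_pos
      (two_sub_one_div_mul_natCast_sub_one_pos hm (mem_Icc.1 hj).1)).ne'
  have hconst : (∏ k ∈ range m, (2 : ℝ) ^ (1 - 2 * α - 2 * k)) *
      (∏ k ∈ range m, (2 : ℝ) ^ (2 * (k : ℝ) - 1)) *
      ((2 * π) ^ ((1 - m : ℝ) / 2) * (2 * π) ^ ((m - 1 : ℝ) / 2)) *
      ((m : ℝ) ^ (-1 / 2 : ℝ) * (2 * m) ^ (2 * m * α) * (m : ℝ) ^ (1 / 2 - 2 * m * α)) = 1 := by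
    rw [prod_rpow_mul_prod_rpow_eq two_pos, rpow_neg_half_mul_two_mul_rpow_mul_rpow (by positivity),
      ← rpow_add (by positivity), show (1 - m : ℝ) / 2 + (m - 1) / 2 = 0 by ring, rpow_zero,
      mul_one, ← rpow_add two_pos, neg_add_cancel, rpow_zero]
  field_simp
  field_simp at hconst
  linear_combination -hconst
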